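/- For every strictly increasing sequence (n_k)_{k∈ℕ} of natural numbers, the Köthe algebra λ^∞(n_k^q) := {ξ ∈ ℂ^ℕ : sup_{k∈ℕ} |ξ_k| n_k^q < ∞ for all q ∈ ℕ₀} is isomorphic as a topological *-algebra to a closed *-subalgebra of s, namely to {ξ ∈ s : ξ_j = 0 for all j ∉ {n_k : k ∈ ℕ}}, via the map sending e_k to e_{n_k}. -/
import Mathlib


noncomputable section

/-- Membership in the space `s` of rapidly decreasing sequences (the paper's index
`j ∈ {1,2,...}` corresponds to `j+1` here). -/
def inS (ξ : ℕ → ℂ) : Prop :=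
  ∀ q : ℕ, Summable fun j : ℕ => ‖ξ j‖ ^ 2 * ((j : ℝ) + 1) ^ (2 * q)

/-- The `q`-th norm `|ξ|_q` on `s`. -/
def sNorm (q : ℕ) (ξ : ℕ → ℂ) : ℝ :=
  Real.sqrt (∑' j : ℕ, ‖ξ j‖ ^ 2 * ((j : ℝ) + 1) ^ (2 * q))

/-- The Köthe algebra `λ^∞(n_k^q)` for a sequence `(n_k)` of positive integers. -/
def lambdaN (n : ℕ → ℕ) : Set (ℕ → ℂ) :=
  {ξ | ∀ q : ℕ, ∃ C : ℝ, ∀ k : ℕ, ‖ξ k‖ * (n k : ℝ) ^ q ≤ C}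

/-- The `q`-th norm `ξ ↦ sup_k |ξ_k| n_k^q` on `λ^∞(n_k^q)`. -/
def kNorm (n : ℕ → ℕ) (q : ℕ) (ξ : ℕ → ℂ) : ℝ :=
  ⨆ k : ℕ, ‖ξ k‖ * (n k : ℝ) ^ q

namespace Stmt8Aux

open Classical in
def Phi (n : ℕ → ℕ) (ξ : ℕ → ℂ) (j : ℕ) : ℂ :=
  if h : ∃ k, n k = j + 1 then ξ h.choose else 0

lemma Phi_good {n : ℕ → ℕ} (hmono : StrictMono n) (ξ : ℕ → ℂ) {k j : ℕ}
    (hk : n k = j + 1) : Phi n ξ j = ξ k := by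
  have h : ∃ k, n k = j + 1 := ⟨k, hk⟩
  have hs := h.choose_spec
  rw [Phi]
  rw [dif_pos h, hmono.injective (hs.trans hk.symm)]

lemma Phi_bad {n : ℕ → ℕ} (ξ : ℕ → ℂ) {j : ℕ} (h : ∀ k, n k ≠ j + 1) :
    Phi n ξ j = 0 := by
  rw [Phi]
  rw [dif_neg]; push_neg; exact h

lemma le_sNorm {ξ : ℕ → ℂ} (hξ : inS ξ) (q j : ℕ) :
    ‖ξ j‖ * ((j : ℝ) + 1) ^ q ≤ sNorm q ξ := by
  have h1 : 0 ≤ ∑' j : ℕ, ‖ξ j‖ ^ 2 * ((j : ℝ) + 1) ^ (2 * q) :=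
    tsum_nonneg fun i => by positivity
  rw [sNorm, Real.le_sqrt (by positivity) h1]
  have h2 := Summable.le_tsum (hξ q) j (fun i _ => by positivity)
  calc (‖ξ j‖ * ((j : ℝ) + 1) ^ q) ^ 2
      = ‖ξ j‖ ^ 2 * ((j : ℝ) + 1) ^ (2 * q) := by
        rw [mul_pow, ← pow_mul, mul_comm q 2]
    _ ≤ _ := h2

lemma inS_add {ξ η : ℕ → ℂ} (hξ : inS ξ) (hη : inS η) : inS (ξ + η) := by
  intro q
  refine Summable.of_nonneg_of_le (fun j => by positivity)
    (fun j => ?_) (((hξ q).add (hη q)).mul_left 2)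
  have h1 : ‖(ξ + η) j‖ ≤ ‖ξ j‖ + ‖η j‖ := norm_add_le _ _
  have h2 : (0:ℝ) ≤ ((j : ℝ) + 1) ^ (2 * q) := by positivity
  have h3 : ‖(ξ + η) j‖ ^ 2 ≤ 2 * (‖ξ j‖ ^ 2 + ‖η j‖ ^ 2) := by
    nlinarith [norm_nonneg ((ξ + η) j), norm_nonneg (ξ j), norm_nonneg (η j),
      sq_nonneg (‖ξ j‖ - ‖η j‖)]
  calc ‖(ξ + η) j‖ ^ 2 * ((j : ℝ) + 1) ^ (2 * q)
      ≤ 2 * (‖ξ j‖ ^ 2 + ‖η j‖ ^ 2) * ((j : ℝ) + 1) ^ (2 * q) := by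
        exact mul_le_mul_of_nonneg_right h3 h2
    _ = 2 * (‖ξ j‖ ^ 2 * ((j : ℝ) + 1) ^ (2 * q) + ‖η j‖ ^ 2 * ((j : ℝ) + 1) ^ (2 * q)) := by
        ring

lemma inS_smul (c : ℂ) {ξ : ℕ → ℂ} (hξ : inS ξ) : inS (c • ξ) := by
  intro q
  have : (fun j : ℕ => ‖(c • ξ) j‖ ^ 2 * ((j : ℝ) + 1) ^ (2 * q))
      = fun j : ℕ => ‖c‖ ^ 2 * (‖ξ j‖ ^ 2 * ((j : ℝ) + 1) ^ (2 * q)) := by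
    funext j
    simp [Pi.smul_apply, norm_smul, mul_pow, mul_assoc]
  rw [this]
  exact (hξ q).mul_left _

lemma inS_neg {ξ : ℕ → ℂ} (hξ : inS ξ) : inS (-ξ) := by
  intro q
  simpa using hξ q

lemma inS_sub {ξ η : ℕ → ℂ} (hξ : inS ξ) (hη : inS η) : inS (ξ - η) := by
  have := inS_add hξ (inS_neg hη)
  simpa [sub_eq_add_neg] using this

lemma inS_mul {ξ η : ℕ → ℂ} (hξ : inS ξ) (hη : inS η) : inS (ξ * η) := by
  intro q
  refine Summable.of_nonneg_of_le (fun j => by positivity)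
    (fun j => ?_) ((hη q).mul_left ((sNorm 0 ξ) ^ 2))
  have h1 : ‖ξ j‖ ≤ sNorm 0 ξ := by
    have := le_sNorm hξ 0 j
    simpa using this
  have h2 : (0:ℝ) ≤ ((j : ℝ) + 1) ^ (2 * q) := by positivity
  have h3 : ‖(ξ * η) j‖ ^ 2 ≤ (sNorm 0 ξ) ^ 2 * ‖η j‖ ^ 2 := by
    have : ‖(ξ * η) j‖ = ‖ξ j‖ * ‖η j‖ := norm_mul _ _
    rw [this, mul_pow]
    exact mul_le_mul_of_nonneg_right
      (pow_le_pow_left₀ (norm_nonneg _) h1 2) (by positivity)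
  calc ‖(ξ * η) j‖ ^ 2 * ((j : ℝ) + 1) ^ (2 * q)
      ≤ (sNorm 0 ξ) ^ 2 * ‖η j‖ ^ 2 * ((j : ℝ) + 1) ^ (2 * q) :=
        mul_le_mul_of_nonneg_right h3 h2
    _ = (sNorm 0 ξ) ^ 2 * (‖η j‖ ^ 2 * ((j : ℝ) + 1) ^ (2 * q)) := by ring

lemma inS_star {ξ : ℕ → ℂ} (hξ : inS ξ) : inS (star ξ) := by
  intro q
  simpa using hξ q

lemma summable_inv_sq : Summable fun j : ℕ => (1:ℝ) / ((j:ℝ)+1)^2 := by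
  have h := (Real.summable_one_div_nat_pow (p := 2)).mpr (by norm_num)
  have := (summable_nat_add_iff 1).mpr h
  simpa using this

end Stmt8Aux

namespace Stmt8Aux

lemma key_bound {n : ℕ → ℕ} (hmono : StrictMono n) (hpos : ∀ k, 0 < n k)
    (ξ : ℕ → ℂ) (q : ℕ) {C : ℝ} (hC : ∀ k, ‖ξ k‖ * (n k : ℝ) ^ (q+1) ≤ C) (j : ℕ) :
    ‖Phi n ξ j‖ ^ 2 * ((j:ℝ)+1) ^ (2*q) ≤ C ^ 2 * (1 / ((j:ℝ)+1) ^ 2) := by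
  by_cases h : ∃ k, n k = j + 1
  · obtain ⟨k, hk⟩ := h
    rw [Phi_good hmono ξ hk]
    have hj : ((j:ℝ)+1) = (n k : ℝ) := by exact_mod_cast hk.symm
    rw [hj]
    have hnk : (0:ℝ) < (n k : ℝ) := by exact_mod_cast hpos k
    rw [mul_one_div, le_div_iff₀ (by positivity)]
    have h1 : (‖ξ k‖ * (n k : ℝ) ^ (q+1)) ^ 2 ≤ C ^ 2 :=
      pow_le_pow_left₀ (by positivity) (hC k) 2
    calc ‖ξ k‖ ^ 2 * ((n k:ℝ)) ^ (2*q) * ((n k:ℝ)) ^ 2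
        = (‖ξ k‖ * (n k : ℝ) ^ (q+1)) ^ 2 := by ring
      _ ≤ C ^ 2 := h1
  · push_neg at h
    have h0 : (0:ℝ) ≤ C ^ 2 * (1 / ((j:ℝ)+1) ^ 2) := by positivity
    simpa [Phi_bad ξ h] using h0

end Stmt8Aux

open Stmt8Aux

/-- For every strictly increasing sequence `(n_k)` of (positive) natural numbers,
`λ^∞(n_k^q)` is isomorphic as a topological *-algebra to the closed *-subalgebra
`E = {ξ ∈ s : ξ_j = 0 for all (paper's) indices j ∉ {n_k}}` of `s`, via the map
sending `e_k` to `e_{n_k}`. (Here the paper's index `j ∈ {1,2,...}` is `j+1`, so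
`ξ j` is the coordinate at the paper's index `j+1`.) -/
theorem stmt_8 (n : ℕ → ℕ) (hmono : StrictMono n) (hpos : ∀ k, 0 < n k)
    (E : Set (ℕ → ℂ))
    (hE : E = {ξ : ℕ → ℂ | inS ξ ∧ ∀ j : ℕ, (∀ k, n k ≠ j + 1) → ξ j = 0}) :
    (∀ ξ ∈ E, ∀ η ∈ E, ξ + η ∈ E) ∧
    (∀ (c : ℂ), ∀ ξ ∈ E, c • ξ ∈ E) ∧
    (∀ ξ ∈ E, ∀ η ∈ E, ξ * η ∈ E) ∧
    (∀ ξ ∈ E, star ξ ∈ E) ∧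
    (∀ ξ : ℕ → ℂ, inS ξ →
      (∀ q : ℕ, ∀ ε : ℝ, 0 < ε → ∃ η ∈ E, sNorm q (ξ - η) < ε) → ξ ∈ E) ∧
    (∃ Φ : (ℕ → ℂ) → (ℕ → ℂ),
      Set.BijOn Φ (lambdaN n) E ∧
      (∀ ξ ∈ lambdaN n, ∀ k : ℕ, Φ ξ (n k - 1) = ξ k) ∧
      (∀ ξ ∈ lambdaN n, ∀ j : ℕ, (∀ k, n k ≠ j + 1) → Φ ξ j = 0) ∧
      (∀ ξ ∈ lambdaN n, ∀ η ∈ lambdaN n, Φ (ξ + η) = Φ ξ + Φ η) ∧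
      (∀ (c : ℂ), ∀ ξ ∈ lambdaN n, Φ (c • ξ) = c • Φ ξ) ∧
      (∀ ξ ∈ lambdaN n, ∀ η ∈ lambdaN n, Φ (ξ * η) = Φ ξ * Φ η) ∧
      (∀ ξ ∈ lambdaN n, Φ (star ξ) = star (Φ ξ)) ∧
      (∀ q : ℕ, ∃ p : ℕ, ∃ C : ℝ, 0 < C ∧ ∀ ξ ∈ lambdaN n, sNorm q (Φ ξ) ≤ C * kNorm n p ξ) ∧
      (∀ p : ℕ, ∃ q : ℕ, ∃ C : ℝ, 0 < C ∧ ∀ ξ ∈ lambdaN n, kNorm n p ξ ≤ C * sNorm q (Φ ξ))) := by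
  subst hE
  have hsub : ∀ k, n k - 1 + 1 = n k := fun k => Nat.succ_pred_eq_of_pos (hpos k)
  have hcast : ∀ k, ((n k - 1 : ℕ) : ℝ) + 1 = (n k : ℝ) := by
    intro k; exact_mod_cast congrArg (Nat.cast : ℕ → ℝ) (hsub k)
  have hgood : ∀ (ξ : ℕ → ℂ) (k : ℕ), Phi n ξ (n k - 1) = ξ k :=
    fun ξ k => Phi_good hmono ξ (hsub k).symm
  have hmaps : ∀ ξ ∈ lambdaN n, Phi n ξ ∈
      {ξ : ℕ → ℂ | inS ξ ∧ ∀ j : ℕ, (∀ k, n k ≠ j + 1) → ξ j = 0} := by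
    intro ξ hξ
    refine ⟨fun q => ?_, fun j hj => Phi_bad ξ hj⟩
    obtain ⟨C, hC⟩ := hξ (q + 1)
    exact Summable.of_nonneg_of_le (fun j => by positivity)
      (key_bound hmono hpos ξ q hC) (summable_inv_sq.mul_left (C ^ 2))
  refine ⟨?_, ?_, ?_, ?_, ?_, ?_⟩
  · rintro ξ ⟨hξs, hξ0⟩ η ⟨hηs, hη0⟩
    exact ⟨inS_add hξs hηs, fun j hj => by simp [Pi.add_apply, hξ0 j hj, hη0 j hj]⟩
  · rintro c ξ ⟨hξs, hξ0⟩
    exact ⟨inS_smul c hξs, fun j hj => by simp [Pi.smul_apply, hξ0 j hj]⟩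
  · rintro ξ ⟨hξs, hξ0⟩ η ⟨hηs, hη0⟩
    exact ⟨inS_mul hξs hηs, fun j hj => by simp [Pi.mul_apply, hξ0 j hj]⟩
  · rintro ξ ⟨hξs, hξ0⟩
    exact ⟨inS_star hξs, fun j hj => by simp [Pi.star_apply, hξ0 j hj]⟩
  · rintro ξ hξs happ
    refine ⟨hξs, fun j hj => ?_⟩
    by_contra h0
    have hε : (0:ℝ) < ‖ξ j‖ := by simpa using h0
    obtain ⟨η, ⟨hηs, hη0⟩, hlt⟩ := happ 0 ‖ξ j‖ hε
    have h1 := le_sNorm (inS_sub hξs hηs) 0 j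
    have h2 : (ξ - η) j = ξ j := by simp [Pi.sub_apply, hη0 j hj]
    rw [h2] at h1
    simp only [pow_zero, mul_one] at h1
    linarith
  · refine ⟨Phi n, ⟨hmaps, ?_, ?_⟩, fun ξ _ k => hgood ξ k,
      fun ξ _ j hj => Phi_bad ξ hj, ?_, ?_, ?_, ?_, ?_, ?_⟩
    · -- InjOn
      intro ξ _ η _ hfe
      funext k
      have := congrFun hfe (n k - 1)
      rwa [hgood, hgood] at this
    · -- SurjOn
      rintro η ⟨hηs, hη0⟩
      refine ⟨fun k => η (n k - 1), fun q => ⟨sNorm q η, fun k => ?_⟩, ?_⟩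
      · have := le_sNorm hηs q (n k - 1)
        rwa [hcast k] at this
      · funext j
        by_cases h : ∃ k, n k = j + 1
        · obtain ⟨k, hk⟩ := h
          rw [Phi_good hmono _ hk]
          congr 1
          omega
        · push_neg at h
          rw [Phi_bad _ h, hη0 j h]
    · -- additive
      intro ξ _ η _
      funext j
      by_cases h : ∃ k, n k = j + 1
      · obtain ⟨k, hk⟩ := h
        simp [Pi.add_apply, Phi_good hmono _ hk]
      · push_neg at h
        simp [Pi.add_apply, Phi_bad _ h]
    · intro c ξ _
      funext j
      by_cases h : ∃ k, n k = j + 1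
      · obtain ⟨k, hk⟩ := h
        simp [Pi.smul_apply, Phi_good hmono _ hk]
      · push_neg at h
        simp [Pi.smul_apply, Phi_bad _ h]
    · intro ξ _ η _
      funext j
      by_cases h : ∃ k, n k = j + 1
      · obtain ⟨k, hk⟩ := h
        simp [Pi.mul_apply, Phi_good hmono _ hk]
      · push_neg at h
        simp [Pi.mul_apply, Phi_bad _ h]
    · intro ξ _
      funext j
      by_cases h : ∃ k, n k = j + 1
      · obtain ⟨k, hk⟩ := h
        simp [Pi.star_apply, Phi_good hmono _ hk]
      · push_neg at h
        simp [Pi.star_apply, Phi_bad _ h]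
    · -- continuity estimate (a)
      intro q
      set S : ℝ := ∑' j : ℕ, (1:ℝ) / ((j:ℝ)+1)^2 with hS
      have hS1 : (1:ℝ) ≤ S := by
        rw [hS]
        have h0 := Summable.le_tsum summable_inv_sq 0 (fun i _ => by positivity)
        simpa using h0
      refine ⟨q + 1, Real.sqrt S, Real.sqrt_pos.mpr (by linarith), ?_⟩
      intro ξ hξ
      obtain ⟨C', hC'⟩ := hξ (q + 1)
      have hbdd : BddAbove (Set.range fun k => ‖ξ k‖ * (n k : ℝ) ^ (q+1)) :=
        ⟨C', by rintro x ⟨k, rfl⟩; exact hC' k⟩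
      set K : ℝ := kNorm n (q+1) ξ with hK
      have hKle : ∀ k, ‖ξ k‖ * (n k : ℝ) ^ (q+1) ≤ K := fun k => le_ciSup hbdd k
      have hK0 : 0 ≤ K := le_trans (by positivity) (hKle 0)
      have hsum1 : Summable fun j : ℕ => ‖Phi n ξ j‖ ^ 2 * ((j:ℝ)+1) ^ (2*q) :=
        (hmaps ξ hξ).1 q
      have hle : (∑' j : ℕ, ‖Phi n ξ j‖ ^ 2 * ((j:ℝ)+1) ^ (2*q))
          ≤ K ^ 2 * S := by
        rw [hS, ← tsum_mul_left]
        exact Summable.tsum_le_tsum (key_bound hmono hpos ξ q hKle) hsum1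
          (summable_inv_sq.mul_left _)
      calc sNorm q (Phi n ξ) ≤ Real.sqrt (K ^ 2 * S) := Real.sqrt_le_sqrt hle
        _ = Real.sqrt S * K := by
            rw [Real.sqrt_mul (sq_nonneg K), Real.sqrt_sq hK0, mul_comm]
    · -- continuity estimate (b)
      intro p
      refine ⟨p, 1, one_pos, ?_⟩
      intro ξ hξ
      rw [one_mul, kNorm]
      refine ciSup_le fun k => ?_
      have h1 := le_sNorm (hmaps ξ hξ).1 p (n k - 1)
      rwa [hgood, hcast k] at h1

end
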